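/- Let n be a positive integer, let d ≥ 1, and let a be an integer with 1 ≤ a ≤ C(n+d-1, d). Let a = C(k_d,d) + C(k_{d-1},d-1) + ... + C(k_2,2) + C(k_1,1) be the d-fractal decomposition of a. Then the truncation of [n]^d to its first a entries equals the concatenation [k_d-d+1]^d ⌢ [k_{d-1}-d+2]^{d-1} ⌢ ... ⌢ [k_2-1]^2 ⌢ [k_1]^1, where each block is [k_i-i+1]^i for i = d, d-1, ..., 1, with the convention that [0]^e is the empty sequence. -/

import Mathlib

/-- The expansion `[σ]` of a finite sequence of positive integers. -/
def expand (σ : List ℕ) : List ℕ := (σ.map fun a => List.range' 1 a).flatten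

/-- The conditions `k_d > k_{d-1} > … > k_2 ≥ k_1 ≥ 1` on a tuple
`(k_1,…,k_d)` (encoded as `k : Fin d → ℕ` with `k ⟨i-1,_⟩ = k_i`). -/
def FracCond (d : ℕ) (k : Fin d → ℕ) : Prop :=
  (∀ h : 0 < d, 1 ≤ k ⟨0, h⟩) ∧
  ∀ (i : ℕ) (h : i + 1 < d),
    if i = 0 then k ⟨i, Nat.lt_of_succ_lt h⟩ ≤ k ⟨i + 1, h⟩
    else k ⟨i, Nat.lt_of_succ_lt h⟩ < k ⟨i + 1, h⟩

/-- `k : Fin d → ℕ` encodes the `d`-fractal decomposition of `a`: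
`a = C(k_d,d) + C(k_{d-1},d-1) + … + C(k_2,2) + C(k_1,1)` with
`k_d > k_{d-1} > … > k_2 ≥ k_1 ≥ 1` (where `C(p,q) = 0` if `p < q`). -/
def IsFracDecomp (d a : ℕ) (k : Fin d → ℕ) : Prop :=
  FracCond d k ∧ a = ∑ i : Fin d, (k i).choose ((i : ℕ) + 1)

/-- The `d`-fractal coefficients `[a]^{(d)} = (k_d-d+2, k_{d-1}-d+3, …, k_3-1, k_2, k_1)`
of a decomposition `k`: the coefficient `c_i` (for the term `C(k_i, i)`) is
`c_1 = k_1` and `c_i = k_i - i + 2` for `i ≥ 2`; in the `Fin d` encoding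
(index `i` stands for `k_{i+1}`) this is `c ⟨i⟩ = k ⟨i⟩ + 1 - i` for `i ≥ 1`. -/
def fracCoeff (d : ℕ) (k : Fin d → ℕ) (i : Fin d) : ℕ :=
  if (i : ℕ) = 0 then k i else k i + 1 - (i : ℕ)

/-! With `[s]^e = expand^[e] [s]`, the identity `[s+1]^(e+1) = [s]^(e+1) ⌢ [s+1]^e` gives
`|[n]^d| = C(n+d-1, d)` and makes `[s]^(e+1)` a prefix of `[t]^(e+1)` whenever `s ≤ t`.
Write `a = C(k_d,d) + r`; the decomposition conditions force `r ≤ C(k_d,d-1)`, so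
`a ≤ C(k_d+1,d) = |[k_d-d+2]^d|` and the first `a` entries of `[n]^d` are those of
`[k_d-d+2]^d = [k_d-d+1]^d ⌢ [k_d-d+2]^(d-1)`: the whole first block, of length `C(k_d,d)`,
followed by the first `r` entries of `[k_d-d+2]^(d-1)`, to which induction on `d` applies. -/

namespace List

theorem flatten_map_reverse_finRange_succ {α : Type*} {n : ℕ} (f : Fin (n + 1) → List α) :
    ((finRange (n + 1)).reverse.map f).flatten =
      f (Fin.last n) ++ ((finRange n).reverse.map fun i => f i.castSucc).flatten := by
  simp [finRange_succ_last, map_reverse, Function.comp_def]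

theorem IsPrefix.take_eq_take {α : Type*} {l₁ l₂ : List α} (h : l₁ <+: l₂) {a : ℕ}
    (ha : a ≤ l₁.length) : l₂.take a = l₁.take a := by
  rw [prefix_iff_eq_take.mp h, take_take, Nat.min_eq_left ha]

end List

theorem expand_append (σ τ : List ℕ) : expand (σ ++ τ) = expand σ ++ expand τ := by
  simp [expand]

theorem iterate_expand_append (e : ℕ) (σ τ : List ℕ) :
    expand^[e] (σ ++ τ) = expand^[e] σ ++ expand^[e] τ := by
  induction e generalizing σ τ with
  | zero => rfl
  | succ e ih => simp only [Function.iterate_succ_apply, expand_append, ih]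

theorem iterate_expand_succ_singleton_zero (e : ℕ) : expand^[e + 1] [0] = [] :=
  Function.iterate_fixed (f := expand) rfl e

theorem iterate_expand_succ_singleton_succ (e s : ℕ) :
    expand^[e + 1] [s + 1] = expand^[e + 1] [s] ++ expand^[e] [s + 1] := by
  have h : expand [s + 1] = expand [s] ++ [s + 1] := by
    simp [expand, List.range'_concat, Nat.add_comm]
  rw [Function.iterate_succ_apply, Function.iterate_succ_apply, h, iterate_expand_append]

theorem length_iterate_expand_singleton (d n : ℕ) :
    (expand^[d] [n]).length = (n + d - 1).choose d := by
  induction d generalizing n with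
  | zero => simp
  | succ d ihd =>
    induction n with
    | zero => simp [iterate_expand_succ_singleton_zero]
    | succ n ihn =>
      rw [iterate_expand_succ_singleton_succ, List.length_append, ihn, ihd,
        show n + 1 + (d + 1) - 1 = n + d + 1 by omega, Nat.choose_succ_succ',
        show n + (d + 1) - 1 = n + d by omega, show n + 1 + d - 1 = n + d by omega, add_comm]

theorem iterate_expand_singleton_prefix (e : ℕ) {s t : ℕ} (h : s ≤ t) :
    expand^[e + 1] [s] <+: expand^[e + 1] [t] := by
  induction t, h using Nat.le_induction with
  | base => exact List.prefix_refl _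
  | succ t _ ih =>
    rw [iterate_expand_succ_singleton_succ]
    exact ih.trans (List.prefix_append _ _)

theorem take_iterate_expand_singleton_eq (e : ℕ) {s t a : ℕ}
    (hs : a ≤ (expand^[e + 1] [s]).length) (ht : a ≤ (expand^[e + 1] [t]).length) :
    (expand^[e + 1] [s]).take a = (expand^[e + 1] [t]).take a := by
  rcases le_total s t with h | h
  · exact ((iterate_expand_singleton_prefix e h).take_eq_take hs).symm
  · exact (iterate_expand_singleton_prefix e h).take_eq_take ht

namespace FracCond

theorem castSucc {d : ℕ} {k : Fin (d + 1) → ℕ} (hk : FracCond (d + 1) k) :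
    FracCond d fun i => k i.castSucc :=
  ⟨fun _ => hk.1 d.succ_pos, fun i hi => hk.2 i (Nat.lt_succ_of_lt hi)⟩

theorem le_apply {d : ℕ} {k : Fin d → ℕ} (hk : FracCond d k) (i : Fin d) : (i : ℕ) ≤ k i := by
  obtain ⟨i, hi⟩ := i
  induction i with
  | zero => exact Nat.zero_le _
  | succ i ih =>
    have hstep := hk.2 i hi
    split_ifs at hstep with h0
    · subst h0
      exact (hk.1 (by omega)).trans hstep
    · exact (ih (by omega)).trans_lt hstep

theorem sum_castSucc_choose_le : ∀ {d : ℕ} {k : Fin (d + 1) → ℕ}, FracCond (d + 1) k →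
    ∑ i : Fin d, (k i.castSucc).choose ((i : ℕ) + 1) ≤ (k (Fin.last d)).choose d
  | 0, _, _ => by simp
  | 1, _, hk => by simpa using hk.2 0 (by omega)
  | d + 2, k, hk => by
    have ih := sum_castSucc_choose_le hk.castSucc
    have hlt : k (Fin.last (d + 1)).castSucc < k (Fin.last (d + 2)) := by
      have h := hk.2 (d + 1) (by omega)
      rwa [if_neg (by omega)] at h
    rw [Fin.sum_univ_castSucc]
    calc _ ≤ (k (Fin.last (d + 1)).castSucc).choose (d + 1)
            + (k (Fin.last (d + 1)).castSucc).choose (d + 2) := by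
          simp only [Fin.val_castSucc, Fin.val_last]
          exact Nat.add_le_add_right ih _
      _ = (k (Fin.last (d + 1)).castSucc + 1).choose (d + 2) := (Nat.choose_succ_succ' _ _).symm
      _ ≤ _ := Nat.choose_le_choose _ hlt

end FracCond

theorem take_iterate_expand_eq_blocks {d n a : ℕ} {k : Fin d → ℕ} (hk : FracCond d k)
    (ha : a = ∑ i : Fin d, (k i).choose ((i : ℕ) + 1)) (hle : a ≤ (expand^[d] [n]).length) :
    (expand^[d] [n]).take a =
      ((List.finRange d).reverse.map fun i : Fin d =>
        expand^[(i : ℕ) + 1] [k i - (i : ℕ)]).flatten := by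
  induction d generalizing n a with
  | zero => simp [ha]
  | succ d ih =>
    set K := k (Fin.last d)
    set r := ∑ i : Fin d, (k i.castSucc).choose ((i : ℕ) + 1)
    have hK : d ≤ K := by simpa using hk.le_apply (Fin.last d)
    have hr : r ≤ K.choose d := hk.sum_castSucc_choose_le
    have har : a = K.choose (d + 1) + r := by
      rw [ha, Fin.sum_univ_castSucc, add_comm]
      simp [K, r]
    have hlen_head : (expand^[d + 1] [K - d]).length = K.choose (d + 1) := by
      rw [length_iterate_expand_singleton, show K - d + (d + 1) - 1 = K by omega]
    have hlen_succ : (expand^[d + 1] [K - d + 1]).length = K.choose d + K.choose (d + 1) := by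
      rw [length_iterate_expand_singleton, show K - d + 1 + (d + 1) - 1 = K + 1 by omega,
        Nat.choose_succ_succ']
    have hlen_tail : (expand^[d] [K - d + 1]).length = K.choose d := by
      rw [length_iterate_expand_singleton, show K - d + 1 + d - 1 = K by omega]
    calc (expand^[d + 1] [n]).take a = (expand^[d + 1] [K - d + 1]).take a :=
          take_iterate_expand_singleton_eq d hle (by omega)
      _ = expand^[d + 1] [K - d] ++ (expand^[d] [K - d + 1]).take r := by
          rw [iterate_expand_succ_singleton_succ, har, ← hlen_head, List.take_length_add_append]
      _ = _ := by
          rw [ih hk.castSucc rfl (hlen_tail ▸ hr), List.flatten_map_reverse_finRange_succ]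
          rfl

theorem take_iterated_expansion_eq_blocks_general (n d a : ℕ)
    (hle : a ≤ (n + d - 1).choose d)
    (k : Fin d → ℕ) (hk : IsFracDecomp d a k) :
    (expand^[d] [n]).take a =
      ((List.finRange d).reverse.map fun i : Fin d =>
        expand^[(i : ℕ) + 1] [k i - (i : ℕ)]).flatten :=
  take_iterate_expand_eq_blocks hk.1 hk.2 ((length_iterate_expand_singleton d n).symm ▸ hle)

/-- Let `1 ≤ a ≤ C(n+d-1, d)` and let `a = C(k_d,d) + … + C(k_2,2) + C(k_1,1)` be the
`d`-fractal decomposition of `a`.  Then the truncation of `[n]^d` to its first `a`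
entries is the concatenation `[k_d-d+1]^d ⌢ [k_{d-1}-d+2]^{d-1} ⌢ … ⌢ [k_2-1]^2 ⌢ [k_1]^1`,
i.e. the blocks are `[k_i - i + 1]^i` for `i = d, d-1, …, 1` (with `[0]^e` the empty
sequence).  In the `Fin d` encoding, the block for index `i` is
`expand^[i+1] [k i - i]` (note `k i - i = k_{i+1} - (i+1) + 1`), taken in decreasing
order of `i`.  Here `[s]^e = expand^[e] [s]`. -/
theorem take_iterated_expansion_eq_blocks (n d a : ℕ) (hn : 0 < n) (hd : 0 < d)
    (ha : 0 < a) (hle : a ≤ (n + d - 1).choose d)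
    (k : Fin d → ℕ) (hk : IsFracDecomp d a k) :
    (expand^[d] [n]).take a =
      ((List.finRange d).reverse.map fun i : Fin d =>
        expand^[(i : ℕ) + 1] [k i - (i : ℕ)]).flatten :=
  take_iterated_expansion_eq_blocks_general n d a hle k hk
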